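/- arXiv:1807.06120 — 4 statements merged into one kernel-verified Lean document; each statement's English description precedes it below -/
import Mathlib

section
/- Let n ≥ 1, 0 ≤ k ≤ n, and let Λⁿ_k be the poset of all nonempty proper subsets of {0,…,n} other than {0,…,n}∖{k}, ordered by inclusion. Let M be a model category and let F be a contravariant functor from Λⁿ_k to M which is a fibrant diagram (every matching map F(α) → M_α(F) is a fibration) and which sends every inclusion to a weak equivalence. Then for every α′ ∈ Λⁿ_k the canonical projection p_{α′} : lim_{α ∈ Λⁿ_k} F(α) → F(α′) is a weak equivalence. -/
open CategoryTheory Limits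

universe v u

/-- `f` is a retract of `g` in the arrow category. -/
def IsRetractOf {C : Type u} [Category.{v} C] {X Y X' Y' : C}
    (f : X ⟶ Y) (g : X' ⟶ Y') : Prop :=
  ∃ (i : X ⟶ X') (r : X' ⟶ X) (j : Y ⟶ Y') (s : Y' ⟶ Y),
    i ≫ r = 𝟙 X ∧ j ≫ s = 𝟙 Y ∧ f ≫ j = i ≫ g ∧ r ≫ f = g ≫ s

/-- A (Quillen) model structure on a category `C`: three classes of morphisms (weak
equivalences, fibrations, cofibrations) satisfying two-out-of-three, closure under
retracts, lifting, and factorization. -/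
structure ModelStructure (C : Type u) [Category.{v} C] where
  W : MorphismProperty C
  Fib : MorphismProperty C
  Cof : MorphismProperty C
  w_id : ∀ X : C, W (𝟙 X)
  fib_id : ∀ X : C, Fib (𝟙 X)
  cof_id : ∀ X : C, Cof (𝟙 X)
  w_comp : ∀ {X Y Z : C} (f : X ⟶ Y) (g : Y ⟶ Z), W f → W g → W (f ≫ g)
  w_cancel_left : ∀ {X Y Z : C} (f : X ⟶ Y) (g : Y ⟶ Z), W f → W (f ≫ g) → W g
  w_cancel_right : ∀ {X Y Z : C} (f : X ⟶ Y) (g : Y ⟶ Z), W g → W (f ≫ g) → W f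
  w_retract : ∀ {X Y X' Y' : C} (f : X ⟶ Y) (g : X' ⟶ Y'), IsRetractOf f g → W g → W f
  fib_retract : ∀ {X Y X' Y' : C} (f : X ⟶ Y) (g : X' ⟶ Y'), IsRetractOf f g → Fib g → Fib f
  cof_retract : ∀ {X Y X' Y' : C} (f : X ⟶ Y) (g : X' ⟶ Y'), IsRetractOf f g → Cof g → Cof f
  lift_trivCof_fib : ∀ {A B X Y : C} (i : A ⟶ B) (p : X ⟶ Y),
    Cof i → W i → Fib p → HasLiftingProperty i p
  lift_cof_trivFib : ∀ {A B X Y : C} (i : A ⟶ B) (p : X ⟶ Y),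
    Cof i → Fib p → W p → HasLiftingProperty i p
  factor_cof_trivFib : ∀ {X Y : C} (f : X ⟶ Y),
    ∃ (Z : C) (i : X ⟶ Z) (p : Z ⟶ Y), Cof i ∧ Fib p ∧ W p ∧ i ≫ p = f
  factor_trivCof_fib : ∀ {X Y : C} (f : X ⟶ Y),
    ∃ (Z : C) (i : X ⟶ Z) (p : Z ⟶ Y), Cof i ∧ W i ∧ Fib p ∧ i ≫ p = f

variable {C : Type u} [Category.{v} C]

/-- An object is fibrant if the map to the terminal object is a fibration. -/
def ModelStructure.Fibrant [HasTerminal C] (MS : ModelStructure C) (X : C) : Prop :=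
  MS.Fib (terminal.from X)

/-- An object is cofibrant if the map from the initial object is a cofibration. -/
def ModelStructure.Cofibrant [HasInitial C] (MS : ModelStructure C) (X : C) : Prop :=
  MS.Cof (initial.to X)

/-- A cylinder object for `X`: a factorization of the fold map `X ⊔ X → X` as a
cofibration followed by a weak equivalence. -/
structure CylObj [HasBinaryCoproducts C] (MS : ModelStructure C) (X : C) where
  I : C
  i₀ : X ⟶ I
  i₁ : X ⟶ I
  π : I ⟶ X
  cof : MS.Cof (coprod.desc i₀ i₁)
  we : MS.W π
  h₀ : i₀ ≫ π = 𝟙 X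
  h₁ : i₁ ≫ π = 𝟙 X

/-- Left homotopy of maps, via some cylinder object. -/
def LeftHomotopic [HasBinaryCoproducts C] (MS : ModelStructure C) {X Y : C}
    (f g : X ⟶ Y) : Prop :=
  ∃ (cyl : CylObj MS X) (H : cyl.I ⟶ Y), cyl.i₀ ≫ H = f ∧ cyl.i₁ ≫ H = g

open Opposite

universe w

section Matching

variable {J : Type w} [PartialOrder J]

/-- The poset of elements strictly below `σ`. -/
abbrev Below (σ : J) : Type w := {τ : J // τ < σ}

/-- The inclusion of `Below σ` into `J`, as a functor of posets. -/
def belowFunctor (σ : J) : Below σ ⥤ J :=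
  Monotone.functor (f := fun τ => τ.1) fun _ _ h => h

variable {M : Type u} [Category.{v} M] [HasLimitsOfSize.{w, w} M]

/-- The restriction of a contravariant functor `F` to the elements strictly below `σ`. -/
def matchingDiagram (F : Jᵒᵖ ⥤ M) (σ : J) : (Below σ)ᵒᵖ ⥤ M :=
  (belowFunctor σ).op ⋙ F

/-- The matching object of `F` at `σ`: the limit of `F` over the nonempty proper
subsets of `σ`. -/
noncomputable def matchingObj (F : Jᵒᵖ ⥤ M) (σ : J) : M :=
  limit (matchingDiagram F σ)

/-- The canonical cone on the matching diagram with apex `F(σ)`. -/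
def matchingCone (F : Jᵒᵖ ⥤ M) (σ : J) : Cone (matchingDiagram F σ) where
  pt := F.obj (op σ)
  π :=
    { app := fun τ => F.map (homOfLE (le_of_lt τ.unop.2)).op
      naturality := by
        intro τ τ' g
        dsimp [matchingDiagram, belowFunctor, Monotone.functor]
        rw [Category.id_comp, ← F.map_comp, ← op_comp]
        congr 1 }

/-- The matching map `F(σ) → M_σ(F)` of `F` at `σ`. -/
noncomputable def matchingMap (F : Jᵒᵖ ⥤ M) (σ : J) : F.obj (op σ) ⟶ matchingObj F σ :=
  limit.lift _ (matchingCone F σ)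

end Matching

/-- The poset `Λⁿ_k` of nonempty proper subsets of `{0, …, n}` other than
`{0, …, n} ∖ {k}`, ordered by inclusion. -/
abbrev Horn (n : ℕ) (k : Fin (n + 1)) : Type :=
  {S : Finset (Fin (n + 1)) //
    S.Nonempty ∧ S ≠ Finset.univ ∧ S ≠ Finset.univ.erase k}

/-!
Write `k * γ` for the face `γ ∪ {k}`. The horn `Λⁿ_k` is the cone `k * ∂Δ` over the boundary of
the face `Δ` opposite to `k`. For any subcomplex `G` of `∂Δ`, the limit of `F` over `k * G` is
built from `F({k})` by attaching the faces `γ` of `G` by increasing inclusion, each together with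
`k * γ`, along the smaller horn `k * ∂γ`. Each attachment is a base change of
`F(k * γ) ⟶ lim_{k * ∂γ} F`, which is a fibration (the matching map at `k * γ` followed by a base
change of the matching map at `γ`) and, by induction, a weak equivalence, since both
`F(k * γ) ⟶ F({k})` and `lim_{k * ∂γ} F ⟶ F({k})` are. Hence `lim F ⟶ F({k})` is a weak
equivalence, and so is every projection `lim F ⟶ F(α)` by two-out-of-three through `k * α`.
-/

lemma isRetractOf_of_retractArrow {X Y X' Y' : C} {f : X ⟶ Y} {g : X' ⟶ Y'}
    (h : RetractArrow f g) : IsRetractOf f g :=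
  ⟨h.i.left, h.r.left, h.i.right, h.r.right, h.left.retract, h.right.retract, h.i_w.symm,
    h.r_w⟩

namespace ModelStructure

variable (MS : ModelStructure C)

lemma w_of_isIso {X Y : C} (f : X ⟶ Y) [IsIso f] : MS.W f :=
  MS.w_retract f (𝟙 X) ⟨𝟙 X, 𝟙 X, inv f, f, by simp, by simp, by simp, by simp⟩ (MS.w_id X)

instance : MS.Fib.IsStableUnderRetracts :=
  ⟨fun h hg ↦ MS.fib_retract _ _ (isRetractOf_of_retractArrow h) hg⟩

instance : (MS.Fib ⊓ MS.W).IsStableUnderRetracts :=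
  ⟨fun h hg ↦ ⟨MS.fib_retract _ _ (isRetractOf_of_retractArrow h) hg.1,
    MS.w_retract _ _ (isRetractOf_of_retractArrow h) hg.2⟩⟩

instance : MorphismProperty.HasFactorization (MS.Cof ⊓ MS.W) MS.Fib where
  nonempty_mapFactorizationData f := by
    obtain ⟨Z, i, p, hi, hiW, hp, fac⟩ := MS.factor_trivCof_fib f
    exact ⟨{ Z, i, p, fac, hi := ⟨hi, hiW⟩, hp }⟩

instance : MorphismProperty.HasFactorization MS.Cof (MS.Fib ⊓ MS.W) where
  nonempty_mapFactorizationData f := by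
    obtain ⟨Z, i, p, hi, hp, hpW, fac⟩ := MS.factor_cof_trivFib f
    exact ⟨{ Z, i, p, fac, hi, hp := ⟨hp, hpW⟩ }⟩

lemma rlp_trivCof : (MS.Cof ⊓ MS.W).rlp = MS.Fib :=
  MorphismProperty.rlp_eq_of_le_rlp_of_hasFactorization_of_isStableUnderRetracts
    fun _ _ _ hp _ _ _ hi ↦ MS.lift_trivCof_fib _ _ hi.1 hi.2 hp

lemma rlp_cof : MS.Cof.rlp = MS.Fib ⊓ MS.W :=
  MorphismProperty.rlp_eq_of_le_rlp_of_hasFactorization_of_isStableUnderRetracts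
    fun _ _ _ hp _ _ _ hi ↦ MS.lift_cof_trivFib _ _ hi hp.1 hp.2

instance : MS.Fib.IsStableUnderComposition := by
  rw [← rlp_trivCof]; infer_instance

instance : MS.Fib.IsStableUnderBaseChange := by
  rw [← rlp_trivCof]; infer_instance

instance : (MS.Fib ⊓ MS.W).IsStableUnderBaseChange := by
  rw [← rlp_cof]; infer_instance

end ModelStructure

section LimitOn

variable {J : Type w} [PartialOrder J] {M : Type u} [Category.{v} M] (F : Jᵒᵖ ⥤ M)

@[simp]
lemma map_homOfLE_op_comp {a b c : J} (hab : a ≤ b) (hbc : b ≤ c) :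
    F.map (homOfLE hbc).op ≫ F.map (homOfLE hab).op = F.map (homOfLE (hab.trans hbc)).op := by
  rw [← F.map_comp, ← op_comp, homOfLE_comp]

def diagramOn (S : Set J) : Sᵒᵖ ⥤ M :=
  (Monotone.functor (f := ((↑) : S → J)) fun _ _ h ↦ h).op ⋙ F

variable [HasLimitsOfSize.{w, w} M]

noncomputable abbrev limitOn (S : Set J) : M :=
  limit (diagramOn F S)

namespace limitOn

variable {F}

noncomputable def π {S : Set J} {β : J} (hβ : β ∈ S) : limitOn F S ⟶ F.obj (op β) :=
  limit.π (diagramOn F S) (op ⟨β, hβ⟩)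

@[simp]
lemma π_map {S : Set J} {β β' : J} (hβ : β ∈ S) (hβ' : β' ∈ S) (hle : β ≤ β') :
    π hβ' ≫ F.map (homOfLE hle).op = π hβ :=
  limit.w (diagramOn F S) (homOfLE (show (⟨β, hβ⟩ : S) ≤ ⟨β', hβ'⟩ from hle)).op

@[ext]
lemma hom_ext {S : Set J} {X : M} {f g : X ⟶ limitOn F S}
    (h : ∀ β (hβ : β ∈ S), f ≫ π hβ = g ≫ π hβ) : f = g :=
  limit.hom_ext fun j ↦ h j.unop.1 j.unop.2

variable (F) in
noncomputable def lift {S : Set J} {X : M} (f : ∀ β ∈ S, X ⟶ F.obj (op β))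
    (hf : ∀ β (hβ : β ∈ S) β' (hβ' : β' ∈ S) (hle : β ≤ β'),
      f β' hβ' ≫ F.map (homOfLE hle).op = f β hβ) : X ⟶ limitOn F S :=
  limit.lift (diagramOn F S)
    { pt := X
      π :=
        { app := fun b ↦ f b.unop.1 b.unop.2
          naturality := fun a b g ↦
            (Category.id_comp _).trans (hf _ b.unop.2 _ a.unop.2 (leOfHom g.unop)).symm } }

@[simp]
lemma lift_π {S : Set J} {X : M} (f : ∀ β ∈ S, X ⟶ F.obj (op β)) (hf) {β : J}
    (hβ : β ∈ S) : lift F f hf ≫ π hβ = f β hβ :=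
  limit.lift_π _ _

variable (F) in
noncomputable def restrict {S S' : Set J} (h : S ⊆ S') : limitOn F S' ⟶ limitOn F S :=
  lift F (fun _ hβ ↦ π (h hβ)) fun _ _ _ _ hle ↦ π_map _ _ hle

@[simp]
lemma restrict_π {S S' : Set J} (h : S ⊆ S') {β : J} (hβ : β ∈ S) :
    restrict F h ≫ π hβ = π (h hβ) :=
  lift_π _ _ _

variable (F) in
noncomputable def fromObj (σ : J) (S : Set J) (hS : ∀ β ∈ S, β ≤ σ) :
    F.obj (op σ) ⟶ limitOn F S :=
  lift F (fun β hβ ↦ F.map (homOfLE (hS β hβ)).op) fun _ _ _ _ _ ↦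
    map_homOfLE_op_comp F _ _

@[simp]
lemma fromObj_π (σ : J) (S : Set J) (hS) {β : J} (hβ : β ∈ S) :
    fromObj F σ S hS ≫ π hβ = F.map (homOfLE (hS β hβ)).op :=
  lift_π _ _ _

variable (F) in
noncomputable def fromLimit (S : Set J) : limit F ⟶ limitOn F S :=
  lift F (fun β _ ↦ limit.π F (op β)) fun _ _ _ _ hle ↦ limit.w F (homOfLE hle).op

@[simp]
lemma fromLimit_π (S : Set J) {β : J} (hβ : β ∈ S) :
    fromLimit F S ≫ π hβ = limit.π F (op β) :=
  lift_π _ _ _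

lemma matchingMap_eq_fromObj (σ : J) :
    matchingMap F σ = fromObj F σ {τ | τ < σ} fun _ h ↦ h.le := by
  apply hom_ext (F := F) (S := {τ | τ < σ})
  intro β hβ
  rw [fromObj_π]
  exact limit.lift_π (matchingCone F σ) _

lemma fromObj_restrict (σ : J) {S S' : Set J} (hSS' : S ⊆ S') (hS' : ∀ β ∈ S', β ≤ σ) :
    fromObj F σ S' hS' ≫ restrict F hSS' = fromObj F σ S fun β hβ ↦ hS' β (hSS' hβ) := by
  ext
  simp

lemma isIso_fromLimit {S : Set J} (hS : ∀ β, β ∈ S) : IsIso (fromLimit F S) := by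
  refine ⟨limit.lift F ⟨_, fun j ↦ π (hS j.unop), fun a b g ↦ ?_⟩, ?_, ?_⟩
  · rw [Subsingleton.elim g (homOfLE (leOfHom g.unop)).op]
    exact (Category.id_comp _).trans (π_map _ _ _).symm
  · ext j
    simp [fromLimit]
  · ext β hβ
    simp only [Category.assoc, fromLimit_π, Category.id_comp]
    exact limit.lift_π _ _

lemma isIso_π_of_subset_singleton {S : Set J} {β : J} (hβ : β ∈ S) (hS : S ⊆ {β}) :
    IsIso (π (F := F) hβ) := by
  refine ⟨lift F (fun γ hγ ↦ F.map (homOfLE (hS hγ).le).op) fun _ _ _ _ _ ↦ ?_, ?_, ?_⟩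
  · exact map_homOfLE_op_comp F _ _
  · ext γ hγ
    obtain rfl := hS hγ
    simp
  · simp

/-- A compatible family on `S'` is one on `S` together with a value at `σ` compatible with it
over `D = S ∩ Iic σ`. -/
lemma isPullback_restrict {S S' D : Set J} (hSS' : S ⊆ S') {σ : J} (hσ : σ ∈ S') (hσS : σ ∉ S)
    (hDS : D ⊆ S) (hDσ : ∀ β ∈ D, β ≤ σ) (hSD : ∀ β ∈ S, β ≤ σ → β ∈ D)
    (hle : ∀ β ∈ S', β ∉ S → β ≤ σ) (hnle : ∀ β ∈ S', β ∉ S → ∀ β' ∈ S, ¬ β ≤ β') :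
    IsPullback (π hσ) (restrict F hSS') (fromObj F σ D hDσ) (restrict F hDS) := by
  classical
  refine IsPullback.of_isLimit' ⟨by ext β hβ; simp [hSS' (hDS hβ)]⟩
    (PullbackCone.IsLimit.mk _ ?lift ?fac_left ?fac_right ?uniq)
  case lift =>
    intro s
    refine lift F (fun β hβ ↦ if hβS : β ∈ S then s.snd ≫ π hβS
      else s.fst ≫ F.map (homOfLE (hle β hβ hβS)).op) fun β hβ β' hβ' hββ' ↦ ?_
    by_cases hβS : β ∈ S <;> by_cases hβ'S : β' ∈ S
    · simp [hβS, hβ'S]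
    · have hβD : β ∈ D := hSD β hβS (hββ'.trans (hle β' hβ' hβ'S))
      simpa [hβS, hβ'S] using s.condition =≫ π hβD
    · exact absurd hββ' (hnle β hβ hβS β' hβ'S)
    · simp [hβS, hβ'S]
  case fac_left =>
    intro s
    simp [hσS]
  case fac_right =>
    intro s
    ext β hβ
    simp [hβ]
  case uniq =>
    intro s m hm₁ hm₂
    ext β hβ
    by_cases hβS : β ∈ S
    · simpa [hβS] using hm₂ =≫ π hβS
    · simp [hβ, hβS, ← hm₁]

end limitOn

end LimitOn

namespace Horn

variable {n : ℕ} {k : Fin (n + 1)}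

open Finset

lemma erase_ssubset_univ_erase (β : Horn n k) : β.1.erase k ⊂ univ.erase k := by
  refine (erase_subset_erase k (subset_univ _)).ssubset_of_ne fun h ↦ ?_
  by_cases hk : k ∈ β.1
  · exact β.2.2.1 (by rw [← insert_erase hk, h, insert_erase (mem_univ k)])
  · exact β.2.2.2 (by rwa [erase_eq_of_notMem hk] at h)

lemma notMem_of_ssubset_univ_erase {γ : Finset (Fin (n + 1))} (hγ : γ ⊂ univ.erase k) :
    k ∉ γ :=
  fun h ↦ (mem_erase.1 (hγ.subset h)).1 rfl

def ofErase (s : Finset (Fin (n + 1))) (hs : s.Nonempty) (h : s.erase k ⊂ univ.erase k) :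
    Horn n k :=
  ⟨s, hs, by rintro rfl; exact h.ne rfl, by rintro rfl; exact h.ne erase_idem⟩

lemma univ_erase_nonempty (hn : 1 ≤ n) (k : Fin (n + 1)) : (univ.erase k).Nonempty := by
  rw [← card_pos, card_erase_of_mem (mem_univ k), card_univ, Fintype.card_fin]
  omega

def vertex (hn : 1 ≤ n) (k : Fin (n + 1)) : Horn n k :=
  ofErase {k} (singleton_nonempty k) (by
    rw [erase_singleton]; exact empty_ssubset.2 (univ_erase_nonempty hn k))

lemma eq_vertex_of_erase_eq_empty (hn : 1 ≤ n) {β : Horn n k} (h : β.1.erase k = ∅) :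
    β = vertex hn k :=
  Subtype.ext (((erase_eq_empty_iff _ _).1 h).resolve_left β.2.1.ne_empty)

def join (γ : Finset (Fin (n + 1))) (hγ : γ ⊂ univ.erase k) : Horn n k :=
  ofErase (insert k γ) (insert_nonempty k γ) (by
    rwa [erase_insert_eq_erase, erase_eq_of_notMem (notMem_of_ssubset_univ_erase hγ)])

lemma join_erase {γ : Finset (Fin (n + 1))} (hγ : γ ⊂ univ.erase k) :
    (join γ hγ).1.erase k = γ := by
  rw [join, ofErase, erase_insert_eq_erase, erase_eq_of_notMem (notMem_of_ssubset_univ_erase hγ)]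

def ofSSubset (γ : Finset (Fin (n + 1))) (hγ : γ ⊂ univ.erase k) (hne : γ.Nonempty) :
    Horn n k :=
  ofErase γ hne (by rwa [erase_eq_of_notMem (notMem_of_ssubset_univ_erase hγ)])

lemma le_join_iff {γ : Finset (Fin (n + 1))} (hγ : γ ⊂ univ.erase k) {β : Horn n k} :
    β ≤ join γ hγ ↔ β.1.erase k ⊆ γ :=
  subset_insert_iff

/-- The cone `k * G` over a family `G` of faces of the face opposite to `k`; `∅ ∈ G` contributes
the apex `{k}`. -/
def cone (k : Fin (n + 1)) (G : Finset (Finset (Fin (n + 1)))) : Set (Horn n k) :=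
  {β | β.1.erase k ∈ G}

lemma vertex_mem_cone (hn : 1 ≤ n) {G : Finset (Finset (Fin (n + 1)))} (hG : ∅ ∈ G) :
    vertex hn k ∈ cone k G := by
  simpa [cone, vertex, ofErase] using hG

lemma cone_mono (k : Fin (n + 1)) {G G' : Finset (Finset (Fin (n + 1)))} (h : G ⊆ G') :
    cone k G ⊆ cone k G' :=
  fun _ hβ ↦ h hβ

lemma le_join_of_mem_cone_Iio {γ : Finset (Fin (n + 1))} (hγ : γ ⊂ univ.erase k) :
    ∀ β ∈ cone k (Iio γ), β ≤ join γ hγ :=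
  fun _ hβ ↦ (le_join_iff hγ).2 (mem_Iio.1 hβ).le

end Horn

namespace Horn

open Finset limitOn

variable {n : ℕ} {k : Fin (n + 1)} {M : Type u} [Category.{v} M] [HasLimitsOfSize.{0, 0} M]
  (MS : ModelStructure M) (F : (Horn n k)ᵒᵖ ⥤ M)

lemma cone_Iio_subset_Iio_join {γ : Finset (Fin (n + 1))} (hγ : γ ⊂ univ.erase k) :
    cone k (Iio γ) ⊆ {β | β < join γ hγ} := fun β hβ ↦
  (le_join_of_mem_cone_Iio hγ β hβ).lt_of_ne fun h ↦ by
    simp [cone, h, join_erase] at hβ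

/-- The horn `cone k (Iio γ) = k * ∂γ` misses exactly one proper face of `k * γ`, namely `γ`. -/
lemma restrict_Iio_join_mem_of_matchingMap_mem (P : MorphismProperty M)
    [P.IsStableUnderBaseChange] {γ : Finset (Fin (n + 1))} (hγ : γ ⊂ univ.erase k)
    (hne : γ.Nonempty) (hP : P (matchingMap F (ofSSubset γ hγ hne))) :
    P (restrict F (cone_Iio_subset_Iio_join hγ)) := by
  have hk := notMem_of_ssubset_univ_erase hγ
  have hγγ : γ.erase k = γ := erase_eq_of_notMem hk
  rw [matchingMap_eq_fromObj] at hP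
  refine P.of_isPullback (isPullback_restrict (F := F) _ (σ := ofSSubset γ hγ hne)
    (ssubset_insert hk) (by simp [cone, ofSSubset, ofErase, hγγ]) (fun β (hβ : β < _) ↦ ?_)
    (fun _ h ↦ h.le) (fun β hβ hβγ ↦ hβγ.lt_of_ne ?_) (fun β hβ hβS ↦ ?_)
    (fun β hβ hβS β' hβ' hββ' ↦ ?_)) hP
  · exact mem_Iio.2 ((erase_subset k β.1).trans_lt hβ)
  · rintro rfl
    simp [cone, ofSSubset, ofErase, hγγ] at hβ
  · replace hβ : β < join γ hγ := hβ
    have hβγ : β.1.erase k = γ :=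
      ((le_join_iff hγ).1 hβ.le).eq_of_not_ssubset fun h ↦ hβS (mem_Iio.2 h)
    have hkβ : k ∉ β.1 := fun hkβ ↦ hβ.ne (Subtype.ext (by rw [← insert_erase hkβ, hβγ]; rfl))
    show β.1 ⊆ γ
    rw [← erase_eq_of_notMem hkβ, hβγ]
  · exact hβS (mem_Iio.2 ((erase_subset_erase k hββ').trans_lt (mem_Iio.1 hβ')))

/-- Removing a maximal face `γ` from `G` removes `γ` and `k * γ` from the cone, which were
attached along the horn `k * ∂γ`. -/
lemma restrict_cone_erase_mem_of_fromObj_mem (P : MorphismProperty M)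
    [P.IsStableUnderBaseChange] {G : Finset (Finset (Fin (n + 1)))}
    (hG : IsLowerSet (G : Set (Finset (Fin (n + 1))))) {γ : Finset (Fin (n + 1))}
    (hγG : Maximal (· ∈ G) γ) (hγ : γ ⊂ univ.erase k)
    (hP : P (fromObj F (join γ hγ) (cone k (Iio γ)) (le_join_of_mem_cone_Iio hγ))) :
    P (restrict F (cone_mono k (erase_subset γ G))) := by
  refine P.of_isPullback (isPullback_restrict (F := F) (cone_mono k (erase_subset γ G))
    (σ := join γ hγ) (D := cone k (Iio γ))
    (by simpa [cone, join_erase] using hγG.prop) (by simp [cone, join_erase])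
    (fun β hβ ↦ mem_erase.2 ⟨(mem_Iio.1 hβ).ne, hG (mem_Iio.1 hβ).le hγG.prop⟩) _
    (fun β hβ hβσ ↦ mem_Iio.2 (((le_join_iff hγ).1 hβσ).lt_of_ne (mem_erase.1 hβ).1))
    (fun β hβ hβS ↦ ?_) (fun β hβ hβS β' hβ' hββ' ↦ ?_)) hP
  · have hβγ : β.1.erase k = γ := by_contra fun h ↦ hβS (mem_erase.2 ⟨h, hβ⟩)
    exact (le_join_iff hγ).2 hβγ.le
  · have hβγ : β.1.erase k = γ := by_contra fun h ↦ hβS (mem_erase.2 ⟨h, hβ⟩)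
    obtain ⟨hβ'γ, hβ'G⟩ := mem_erase.1 hβ'
    exact hβ'γ (hγG.eq_of_le hβ'G (hβγ ▸ erase_subset_erase k hββ')).symm

lemma fromObj_join_mem_trivFib (hn : 1 ≤ n) (hfib : ∀ σ : Horn n k, MS.Fib (matchingMap F σ))
    (hwe : ∀ (a b : (Horn n k)ᵒᵖ) (g : a ⟶ b), MS.W (F.map g))
    {γ : Finset (Fin (n + 1))} (hγ : γ ⊂ univ.erase k) (hne : γ.Nonempty)
    (hW : MS.W (π (F := F) (vertex_mem_cone hn (G := Iio γ) (mem_Iio.2 (empty_ssubset.2 hne))))) :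
    (MS.Fib ⊓ MS.W) (fromObj F (join γ hγ) (cone k (Iio γ)) (le_join_of_mem_cone_Iio hγ)) := by
  refine ⟨?_, MS.w_cancel_right _ _ hW (by rw [fromObj_π]; exact hwe _ _ _)⟩
  rw [← fromObj_restrict _ (cone_Iio_subset_Iio_join hγ) fun _ h ↦ h.le,
    ← matchingMap_eq_fromObj]
  exact MS.Fib.comp_mem _ _ (hfib _)
    (restrict_Iio_join_mem_of_matchingMap_mem F MS.Fib hγ hne (hfib _))


theorem weakEquivalence_π_vertex_cone (hn : 1 ≤ n)
    (hfib : ∀ σ : Horn n k, MS.Fib (matchingMap F σ))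
    (hwe : ∀ (a b : (Horn n k)ᵒᵖ) (g : a ⟶ b), MS.W (F.map g))
    (G : Finset (Finset (Fin (n + 1)))) (hG : IsLowerSet (G : Set (Finset (Fin (n + 1)))))
    (h0 : ∅ ∈ G) (hGk : ∀ γ ∈ G, γ ⊂ univ.erase k) :
    MS.W (π (F := F) (vertex_mem_cone hn h0)) := by
  induction G using Finset.strongInduction with
  | H G ih =>
  rcases (G.erase ∅).eq_empty_or_nonempty with hG0 | hne
  · have : IsIso (π (F := F) (vertex_mem_cone hn h0)) :=
      isIso_π_of_subset_singleton _ fun β hβ ↦ eq_vertex_of_erase_eq_empty hn <|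
        by_contra fun h ↦ by simpa [hG0] using (mem_erase.2 ⟨h, hβ⟩ : β.1.erase k ∈ G.erase ∅)
    exact MS.w_of_isIso _
  obtain ⟨γ, hγ⟩ := exists_maximal hne
  obtain ⟨hγ0, hγG⟩ := mem_erase.1 hγ.prop
  have hγmax : Maximal (· ∈ G) γ :=
    ⟨hγG, fun δ hδ hγδ ↦ hγ.2 (mem_erase.2 ⟨fun h ↦ hγ0 (subset_empty.1 (h ▸ hγδ)), hδ⟩) hγδ⟩
  have hγk := hGk γ hγG
  have hne : γ.Nonempty := nonempty_iff_ne_empty.2 hγ0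
  have hIio : Iio γ ⊂ G :=
    (ssubset_iff_of_subset fun δ hδ ↦ hG (mem_Iio.1 hδ).le hγG).2 ⟨γ, hγG, by simp⟩
  have hfill := fromObj_join_mem_trivFib MS F hn hfib hwe hγk hne
    (ih _ hIio (by simpa using isLowerSet_Iio γ) (mem_Iio.2 (empty_ssubset.2 hne))
      fun δ hδ ↦ (mem_Iio.1 hδ).trans hγk)
  have hres := restrict_cone_erase_mem_of_fromObj_mem F _ hG hγmax hγk hfill
  have h0' : ∅ ∈ G.erase γ := mem_erase.2 ⟨hγ0.symm, h0⟩
  rw [← restrict_π (cone_mono k (erase_subset γ G)) (vertex_mem_cone hn h0')]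
  exact MS.w_comp _ _ hres.2 (ih _ (erase_ssubset hγG) (by
    rw [coe_erase]; exact hG.erase fun δ hδ hγδ ↦ (hγmax.eq_of_le hδ hγδ).symm) h0'
    fun δ hδ ↦ hGk δ (mem_of_mem_erase hδ))

theorem weakEquivalence_limit_π_vertex (hn : 1 ≤ n)
    (hfib : ∀ σ : Horn n k, MS.Fib (matchingMap F σ))
    (hwe : ∀ (a b : (Horn n k)ᵒᵖ) (g : a ⟶ b), MS.W (F.map g)) :
    MS.W (limit.π F (op (vertex hn k))) := by
  have hall : ∀ β, β ∈ cone k (Iio (univ.erase k)) :=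
    fun β ↦ mem_Iio.2 β.erase_ssubset_univ_erase
  have h0 : ∅ ∈ Iio (univ.erase k) := mem_Iio.2 (empty_ssubset.2 (univ_erase_nonempty hn k))
  have := isIso_fromLimit (F := F) hall
  rw [← fromLimit_π _ (vertex_mem_cone hn h0)]
  exact MS.w_comp _ _ (MS.w_of_isIso _) (weakEquivalence_π_vertex_cone MS F hn hfib hwe _
    (by simpa using isLowerSet_Iio _) h0 fun γ hγ ↦ mem_Iio.1 hγ)

end Horn

/-- for a fibrant diagram `F : (Λⁿ_k)ᵒᵖ ⥤ M` sending every inclusion to a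
weak equivalence, every canonical projection from the limit is a weak equivalence. -/
theorem limit_projection_weakEquivalence_of_horn_diagram
    (n : ℕ) (hn : 1 ≤ n) (k : Fin (n + 1))
    {M : Type u} [Category.{v} M] [HasLimitsOfSize.{0, 0} M] (MS : ModelStructure M)
    (F : (Horn n k)ᵒᵖ ⥤ M)
    (hfib : ∀ σ : Horn n k, MS.Fib (matchingMap F σ))
    (hwe : ∀ (a b : (Horn n k)ᵒᵖ) (g : a ⟶ b), MS.W (F.map g))
    (α' : Horn n k) :
    MS.W (limit.π F (op α')) := by
  let δ := Horn.join _ α'.erase_ssubset_univ_erase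
  have hαδ : α' ≤ δ := (Horn.le_join_iff _).2 subset_rfl
  have hvδ : Horn.vertex hn k ≤ δ := (Horn.le_join_iff _).2 (by simp [Horn.vertex, Horn.ofErase])
  have hδ : MS.W (limit.π F (op δ)) :=
    MS.w_cancel_right _ _ (hwe _ _ (homOfLE hvδ).op)
      (by rw [limit.w]; exact Horn.weakEquivalence_limit_π_vertex MS F hn hfib hwe)
  rw [← limit.w F (homOfLE hαδ).op]
  exact MS.w_comp _ _ hδ (hwe _ _ _)
end

section
/- Let E be a model category with functorial factorizations giving a cofibrant replacement functor Q (with a natural trivial fibration q_X : QX → X, QX cofibrant) and a fibrant replacement functor R (with a natural trivial cofibration r_X : X → RX, RX fibrant). Let D ⊆ E be a full subcategory closed under Q and R (if X ∈ D then QX ∈ D and RX ∈ D) and such that every object of D admits a cylinder object belonging to D, and let W_D be the class of weak equivalences of E lying in D. Then for all X, Y ∈ D the assignment sending a map f : QX → RY to the composite L(r_Y)⁻¹ ∘ L(f) ∘ L(q_X)⁻¹ : X → Y in D[W_D⁻¹] induces a bijection Hom_D(QX, RY)/∼ ≅ Hom_{D[W_D⁻¹]}(X, Y), where ∼ is the left-homotopy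 relation. -/
/-!
Left homotopy is a congruence on maps between bifibrant objects (transitivity is obtained without
pushouts, by cancelling a weak equivalence out of a fibrant object), and by Whitehead's argument
weak equivalences between bifibrant objects are homotopy equivalences. So the category `Ho` with
the objects of `D` and the homotopy classes `[RQA, RQB]` as morphisms receives a functor from `D`
inverting `W_D`, which factors through `D[W_D⁻¹]`. Since every object of `D` has a cylinder in `D`,
homotopic maps into fibrant objects become equal in `D[W_D⁻¹]`; this gives a functor
`Ho ⥤ D[W_D⁻¹]` left inverse to the factored one. Surjectivity follows, and injectivity because
`L f = L g` forces `RQf ∼ RQg`, which conjugation by a section of `q_{QX}` and a retraction of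
`r_{RY}` turns into `f ∼ g`.
-/

open CategoryTheory Limits

universe v u

variable {C : Type u} [Category.{v} C]

/-- The class of weak equivalences of `E` lying in the full subcategory of objects
satisfying `P`. -/
def subW {E : Type u} [Category.{v} E] (MS : ModelStructure E) (P : E → Prop) :
    MorphismProperty (ObjectProperty.FullSubcategory P) :=
  fun X Y f => MS.W (X := X.obj) (Y := Y.obj) f.hom

/-- The map sending `f : QX ⟶ RY` to `L(r_Y)⁻¹ ∘ L(f) ∘ L(q_X)⁻¹ : X ⟶ Y` in the
localization `D[W_D⁻¹]` of the full subcategory `D` of objects satisfying `P`. -/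
noncomputable def locRep {E : Type u} [Category.{v} E]
    (MS : ModelStructure E) (P : E → Prop)
    {QX X RY Y : E} (hQX : P QX) (hX : P X) (hRY : P RY) (hY : P Y)
    (qX : QX ⟶ X) (hq : MS.W qX) (rY : Y ⟶ RY) (hr : MS.W rY)
    (f : QX ⟶ RY) :
    (subW MS P).Q.obj ⟨X, hX⟩ ⟶ (subW MS P).Q.obj ⟨Y, hY⟩ :=
  (Localization.isoOfHom (subW MS P).Q (subW MS P)
      (show (⟨QX, hQX⟩ : ObjectProperty.FullSubcategory P) ⟶ ⟨X, hX⟩ from ObjectProperty.homMk qX) hq).inv ≫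
    (subW MS P).Q.map (show (⟨QX, hQX⟩ : ObjectProperty.FullSubcategory P) ⟶ ⟨RY, hRY⟩ from ObjectProperty.homMk f) ≫
    (Localization.isoOfHom (subW MS P).Q (subW MS P)
      (show (⟨Y, hY⟩ : ObjectProperty.FullSubcategory P) ⟶ ⟨RY, hRY⟩ from ObjectProperty.homMk rY) hr).inv

attribute [local simp] coprod.inl_desc coprod.inr_desc coprod.inl_desc_assoc coprod.inr_desc_assoc

section ModelCategory

variable {E : Type u} [Category.{v} E]

lemma exists_lift_of_hasLiftingProperty {A B U V : E} {i : A ⟶ B} {p : U ⟶ V}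
    (h : HasLiftingProperty i p) {f : A ⟶ U} {g : B ⟶ V} (w : f ≫ p = i ≫ g) :
    ∃ l : B ⟶ U, i ≫ l = f ∧ l ≫ p = g :=
  ⟨(CommSq.mk w).lift, CommSq.fac_left _, CommSq.fac_right _⟩

namespace ModelStructure

variable (MS : ModelStructure E)

lemma cof_of_hasLiftingProperty {A B : E} {i : A ⟶ B}
    (h : ∀ ⦃U V : E⦄ (p : U ⟶ V), MS.Fib p → MS.W p → HasLiftingProperty i p) : MS.Cof i := by
  obtain ⟨Z, c, t, hc, htf, htw, hct⟩ := MS.factor_cof_trivFib i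
  obtain ⟨l, hl, hlt⟩ := exists_lift_of_hasLiftingProperty (h t htf htw) (f := c) (g := 𝟙 B)
    (by simp [hct])
  exact MS.cof_retract i c
    ⟨𝟙 A, 𝟙 A, l, t, by simp, hlt, by simpa using hl, by simpa using hct.symm⟩ hc

lemma fib_of_hasLiftingProperty {U V : E} {p : U ⟶ V}
    (h : ∀ ⦃A B : E⦄ (i : A ⟶ B), MS.Cof i → MS.W i → HasLiftingProperty i p) : MS.Fib p := by
  obtain ⟨Z, j, t, hjc, hjw, htf, hjt⟩ := MS.factor_trivCof_fib p
  obtain ⟨l, hjl, hl⟩ := exists_lift_of_hasLiftingProperty (h j hjc hjw) (f := 𝟙 U) (g := t)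
    (by simp [hjt])
  exact MS.fib_retract p t
    ⟨j, l, 𝟙 V, 𝟙 V, hjl, by simp, by simpa using hjt.symm, by simpa using hl⟩ htf

lemma cof_comp {A B C : E} {i : A ⟶ B} {j : B ⟶ C} (hi : MS.Cof i) (hj : MS.Cof j) :
    MS.Cof (i ≫ j) :=
  MS.cof_of_hasLiftingProperty fun _ _ p hpf hpw =>
    have := MS.lift_cof_trivFib i p hi hpf hpw
    have := MS.lift_cof_trivFib j p hj hpf hpw
    inferInstance

lemma fib_comp {A B C : E} {p : A ⟶ B} {p' : B ⟶ C} (hp : MS.Fib p) (hp' : MS.Fib p') :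
    MS.Fib (p ≫ p') :=
  MS.fib_of_hasLiftingProperty fun _ _ i hic hiw =>
    have := MS.lift_trivCof_fib i p hic hiw hp
    have := MS.lift_trivCof_fib i p' hic hiw hp'
    inferInstance

lemma cof_of_isIso {A B : E} (e : A ⟶ B) [IsIso e] : MS.Cof e :=
  MS.cof_of_hasLiftingProperty fun _ _ _ _ _ => inferInstance

lemma factor_trivCof_trivFib {X Y : E} {f : X ⟶ Y} (hf : MS.W f) :
    ∃ (Z : E) (j : X ⟶ Z) (p : Z ⟶ Y), MS.Cof j ∧ MS.W j ∧ MS.Fib p ∧ MS.W p ∧ j ≫ p = f := by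
  obtain ⟨Z, j, p, hjc, hjw, hpf, rfl⟩ := MS.factor_trivCof_fib f
  exact ⟨Z, j, p, hjc, hjw, hpf, MS.w_cancel_left j p hjw hf, rfl⟩

lemma fibrant_of_fib [HasTerminal E] {A B : E} {p : A ⟶ B} (hp : MS.Fib p) (hB : MS.Fibrant B) :
    MS.Fibrant A := by
  rw [Fibrant, Subsingleton.elim (terminal.from A) (p ≫ terminal.from B)]
  exact MS.fib_comp hp hB

lemma cofibrant_of_cof [HasInitial E] {A B : E} {i : A ⟶ B} (hi : MS.Cof i) (hA : MS.Cofibrant A) :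
    MS.Cofibrant B := by
  rw [Cofibrant, Subsingleton.elim (initial.to B) (initial.to A ≫ i)]
  exact MS.cof_comp hA hi

lemma exists_extension_of_fibrant [HasTerminal E] {A B Y : E} (hY : MS.Fibrant Y) {j : A ⟶ B}
    (hjc : MS.Cof j) (hjw : MS.W j) (u : A ⟶ Y) : ∃ v : B ⟶ Y, j ≫ v = u :=
  (exists_lift_of_hasLiftingProperty (MS.lift_trivCof_fib j _ hjc hjw hY)
    (g := terminal.from B) (Subsingleton.elim _ _)).imp fun _ => And.left

lemma exists_lift_of_cofibrant [HasInitial E] {X U V : E} (hX : MS.Cofibrant X) {p : U ⟶ V}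
    (hpf : MS.Fib p) (hpw : MS.W p) (u : X ⟶ V) : ∃ l : X ⟶ U, l ≫ p = u :=
  (exists_lift_of_hasLiftingProperty (MS.lift_cof_trivFib _ p hX hpf hpw)
    (f := initial.to U) (Subsingleton.elim _ _)).imp fun _ => And.right

variable [HasBinaryCoproducts E]

lemma cof_inl [HasInitial E] {A Z : E} (hZ : MS.Cofibrant Z) : MS.Cof (coprod.inl : A ⟶ A ⨿ Z) :=
  MS.cof_of_hasLiftingProperty fun _ _ p hpf hpw => ⟨fun {t b} sq => by
    obtain ⟨z, hz⟩ := MS.exists_lift_of_cofibrant hZ hpf hpw (coprod.inr ≫ b)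
    exact CommSq.HasLift.mk' ⟨coprod.desc t z, by simp, by ext <;> simp [sq.w, hz]⟩⟩

lemma nonempty_cylObj (X : E) : Nonempty (CylObj MS X) := by
  obtain ⟨Z, i, p, hic, -, hpw, hip⟩ := MS.factor_cof_trivFib (coprod.desc (𝟙 X) (𝟙 X))
  refine ⟨⟨Z, coprod.inl ≫ i, coprod.inr ≫ i, p, ?_, hpw, by simp [hip], by simp [hip]⟩⟩
  convert hic
  ext <;> simp

end ModelStructure

namespace CylObj

variable [HasBinaryCoproducts E] {MS : ModelStructure E} {X : E} (cyl : CylObj MS X)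

lemma w_i₀ : MS.W cyl.i₀ :=
  MS.w_cancel_right _ _ cyl.we (by rw [cyl.h₀]; exact MS.w_id X)

lemma cof_i₀ [HasInitial E] (hX : MS.Cofibrant X) : MS.Cof cyl.i₀ := by
  simpa using MS.cof_comp (MS.cof_inl hX) cyl.cof

end CylObj

end ModelCategory

section LeftHomotopy

variable {E : Type u} [Category.{v} E] [HasBinaryCoproducts E] {MS : ModelStructure E}

lemma CylObj.exists_lift_of_trivFib {X U V : E} (cyl : CylObj MS X) {p : U ⟶ V} (hpf : MS.Fib p)
    (hpw : MS.W p) {a b : X ⟶ U} {K : cyl.I ⟶ V} (ha : a ≫ p = cyl.i₀ ≫ K)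
    (hb : b ≫ p = cyl.i₁ ≫ K) :
    ∃ K' : cyl.I ⟶ U, cyl.i₀ ≫ K' = a ∧ cyl.i₁ ≫ K' = b ∧ K' ≫ p = K := by
  obtain ⟨K', hK', hK'p⟩ := exists_lift_of_hasLiftingProperty
    (MS.lift_cof_trivFib _ p cyl.cof hpf hpw) (f := coprod.desc a b) (g := K)
    (by ext <;> simp [ha, hb])
  exact ⟨K', by simpa using coprod.inl ≫= hK', by simpa using coprod.inr ≫= hK', hK'p⟩

namespace LeftHomotopic

lemma refl {X Y : E} (f : X ⟶ Y) : LeftHomotopic MS f f := by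
  obtain ⟨cyl⟩ := MS.nonempty_cylObj X
  exact ⟨cyl, cyl.π ≫ f, by simp [reassoc_of% cyl.h₀], by simp [reassoc_of% cyl.h₁]⟩

lemma symm {X Y : E} {f g : X ⟶ Y} (h : LeftHomotopic MS f g) : LeftHomotopic MS g f := by
  obtain ⟨cyl, H, h₀, h₁⟩ := h
  refine ⟨⟨cyl.I, cyl.i₁, cyl.i₀, cyl.π, ?_, cyl.we, cyl.h₁, cyl.h₀⟩, H, h₁, h₀⟩
  convert MS.cof_comp (MS.cof_of_isIso (coprod.braiding X X).hom) cyl.cof using 1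
  ext <;> simp

lemma postcomp {X Y Z : E} {f g : X ⟶ Y} (h : LeftHomotopic MS f g) (e : Y ⟶ Z) :
    LeftHomotopic MS (f ≫ e) (g ≫ e) :=
  let ⟨cyl, H, h₀, h₁⟩ := h
  ⟨cyl, H ≫ e, by rw [← h₀, Category.assoc], by rw [← h₁, Category.assoc]⟩

variable [HasTerminal E]

lemma exists_homotopy_precomp {A X Y : E} {m₀ m₁ : A ⟶ Y} (h : LeftHomotopic MS m₀ m₁)
    (hY : MS.Fibrant Y) (d : X ⟶ A) (cyl : CylObj MS X) :
    ∃ H : cyl.I ⟶ Y, cyl.i₀ ≫ H = d ≫ m₀ ∧ cyl.i₁ ≫ H = d ≫ m₁ := by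
  obtain ⟨cylA, H, rfl, rfl⟩ := h
  obtain ⟨T, k, p, hkc, hkw, hpf, hpw, hkp⟩ := MS.factor_trivCof_trivFib cylA.we
  obtain ⟨H', hH'⟩ := MS.exists_extension_of_fibrant hY hkc hkw H
  obtain ⟨ψ, hψ₀, hψ₁, -⟩ := cyl.exists_lift_of_trivFib hpf hpw (a := d ≫ cylA.i₀ ≫ k)
    (b := d ≫ cylA.i₁ ≫ k) (K := cyl.π ≫ d)
    (by simp [hkp, cylA.h₀, reassoc_of% cyl.h₀]) (by simp [hkp, cylA.h₁, reassoc_of% cyl.h₁])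
  exact ⟨ψ ≫ H', by simp [reassoc_of% hψ₀, hH'], by simp [reassoc_of% hψ₁, hH']⟩

lemma precomp {A X Y : E} {m₀ m₁ : A ⟶ Y} (h : LeftHomotopic MS m₀ m₁) (hY : MS.Fibrant Y)
    (d : X ⟶ A) : LeftHomotopic MS (d ≫ m₀) (d ≫ m₁) := by
  obtain ⟨cyl⟩ := MS.nonempty_cylObj X
  obtain ⟨H, h₀, h₁⟩ := h.exists_homotopy_precomp hY d cyl
  exact ⟨cyl, H, h₀, h₁⟩

lemma of_comp_right {S T X : E} {v : S ⟶ T} (hv : MS.W v) (hS : MS.Fibrant S) {a b : X ⟶ S}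
    (h : LeftHomotopic MS (a ≫ v) (b ≫ v)) : LeftHomotopic MS a b := by
  obtain ⟨cyl, K, hK₀, hK₁⟩ := h
  obtain ⟨Z, j, p, hjc, hjw, hpf, hpw, rfl⟩ := MS.factor_trivCof_trivFib hv
  obtain ⟨ρ, hρ⟩ := MS.exists_extension_of_fibrant hS hjc hjw (𝟙 S)
  obtain ⟨K', h₀, h₁, -⟩ := cyl.exists_lift_of_trivFib hpf hpw (a := a ≫ j) (b := b ≫ j)
    (by simpa using hK₀.symm) (by simpa using hK₁.symm)
  exact ⟨cyl, K' ≫ ρ, by simp [reassoc_of% h₀, hρ], by simp [reassoc_of% h₁, hρ]⟩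

lemma trans [HasInitial E] {X Y : E} (hXc : MS.Cofibrant X) (hXf : MS.Fibrant X)
    (hY : MS.Fibrant Y) {f g h : X ⟶ Y} (hfg : LeftHomotopic MS f g)
    (hgh : LeftHomotopic MS g h) : LeftHomotopic MS f h := by
  obtain ⟨cyl, H, rfl, rfl⟩ := hfg
  obtain ⟨cyl', G, hG₀, rfl⟩ := hgh
  -- Lift `G` to `G'` through the fibration part `p` of `H`. Then `G' ≫ v` is a homotopy from
  -- `cyl.i₀ ≫ j ≫ v` to `cyl'.i₁ ≫ G' ≫ v`, and the weak equivalence `v` cancels.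
  obtain ⟨N, j, p, hjc, hjw, hpf, rfl⟩ := MS.factor_trivCof_fib H
  obtain ⟨v, hv⟩ := MS.exists_extension_of_fibrant hXf hjc hjw cyl.π
  have hvw : MS.W v := MS.w_cancel_left _ _ hjw (hv ▸ cyl.we)
  obtain ⟨G', hG'₀, rfl⟩ := exists_lift_of_hasLiftingProperty
    (MS.lift_trivCof_fib _ p (cyl'.cof_i₀ hXc) cyl'.w_i₀ hpf) (f := cyl.i₁ ≫ j) (g := G)
    (by simpa using hG₀.symm)
  have hends : (cyl.i₀ ≫ j) ≫ v = (cyl'.i₀ ≫ G') ≫ v := by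
    simp [hv, hG'₀, cyl.h₀, cyl.h₁]
  have : LeftHomotopic MS ((cyl.i₀ ≫ j) ≫ v) ((cyl'.i₁ ≫ G') ≫ v) :=
    hends ▸ ⟨cyl', G' ≫ v, by simp, by simp⟩
  simpa using (of_comp_right hvw (MS.fibrant_of_fib hpf hY) this).postcomp p

end LeftHomotopic

variable [HasInitial E] [HasTerminal E]

lemma exists_leftHomotopic_inverse {S T : E} (hS : MS.Fibrant S) (hTc : MS.Cofibrant T)
    (hTf : MS.Fibrant T) {v : S ⟶ T} (hv : MS.W v) :
    ∃ w : T ⟶ S, LeftHomotopic MS (v ≫ w) (𝟙 S) ∧ LeftHomotopic MS (w ≫ v) (𝟙 T) := by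
  -- With `v = j ≫ p`, a retraction of `j` and a section of `p` compose to a homotopy inverse.
  obtain ⟨Z, j, p, hjc, hjw, hpf, hpw, rfl⟩ := MS.factor_trivCof_trivFib hv
  have hZ : MS.Fibrant Z := MS.fibrant_of_fib hpf hTf
  obtain ⟨ρ, hρ⟩ := MS.exists_extension_of_fibrant hS hjc hjw (𝟙 S)
  obtain ⟨s, hs⟩ := MS.exists_lift_of_cofibrant hTc hpf hpw (𝟙 T)
  have hρw : MS.W ρ := MS.w_cancel_left _ _ hjw (hρ ▸ MS.w_id S)
  have hρj : LeftHomotopic MS (ρ ≫ j) (𝟙 Z) :=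
    .of_comp_right hρw hZ (by simpa [hρ] using .refl ρ)
  have hps : LeftHomotopic MS (p ≫ s) (𝟙 Z) :=
    .of_comp_right hpw hZ (by simpa [hs] using .refl p)
  refine ⟨s ≫ ρ, ?_, ?_⟩
  · simpa [hρ] using (hps.precomp hZ j).postcomp ρ
  · simpa [hs] using (hρj.precomp hZ s).postcomp p

end LeftHomotopy

def CategoryTheory.Functor.toInducedCategory {C₁ C₂ : Type*} [Category C₁] [Category C₂]
    (Φ : C₁ ⥤ C₂) : C₁ ⥤ InducedCategory C₂ Φ.obj where
  obj A := A
  map u := InducedCategory.homMk (Φ.map u)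

open ObjectProperty

lemma map_eq_of_leftHomotopic {E : Type u} [Category.{v} E] [HasBinaryCoproducts E]
    [HasTerminal E] {MS : ModelStructure E} {P : E → Prop}
    (hcyl : ∀ X : E, P X → ∃ cyl : CylObj MS X, P cyl.I)
    {A B : FullSubcategory P} {f g : A ⟶ B} (hB : MS.Fibrant B.obj)
    (h : LeftHomotopic MS f.hom g.hom) : (subW MS P).Q.map f = (subW MS P).Q.map g := by
  obtain ⟨cyl, hI⟩ := hcyl _ A.property
  obtain ⟨H, h₀, h₁⟩ := h.exists_homotopy_precomp hB (𝟙 _) cyl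
  let I : FullSubcategory P := ⟨cyl.I, hI⟩
  have : IsIso ((subW MS P).Q.map (homMk cyl.π : I ⟶ A)) := (subW MS P).Q_inverts _ cyl.we
  have hends : (subW MS P).Q.map (homMk cyl.i₀ : A ⟶ I) = (subW MS P).Q.map (homMk cyl.i₁) := by
    rw [← cancel_mono ((subW MS P).Q.map (homMk cyl.π : I ⟶ A)), ← Functor.map_comp,
      ← Functor.map_comp]
    congr 1
    ext
    simp [cyl.h₀, cyl.h₁]
  have hf : f = homMk cyl.i₀ ≫ (homMk H : I ⟶ B) := by ext; simpa using h₀.symm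
  have hg : g = homMk cyl.i₁ ≫ (homMk H : I ⟶ B) := by ext; simpa using h₁.symm
  rw [hf, hg, Functor.map_comp, Functor.map_comp, hends]

structure BifibrantReplacement {E : Type u} [Category.{v} E] [HasInitial E] [HasTerminal E]
    (MS : ModelStructure E) (P : E → Prop) where
  functor : FullSubcategory P ⥤ FullSubcategory P
  cofibrant_obj : ∀ A, MS.Cofibrant (functor.obj A).obj
  fibrant_obj : ∀ A, MS.Fibrant (functor.obj A).obj
  w_map : ∀ ⦃A B : FullSubcategory P⦄ (u : A ⟶ B), MS.W u.hom → MS.W (functor.map u).hom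
  isoLocalization : functor ⋙ (subW MS P).Q ≅ (subW MS P).Q

namespace BifibrantReplacement

variable {E : Type u} [Category.{v} E] [HasBinaryCoproducts E] [HasInitial E] [HasTerminal E]
  {MS : ModelStructure E} {P : E → Prop} (Φ : BifibrantReplacement MS P)

def homotopyRel : HomRel (InducedCategory _ Φ.functor.obj) :=
  fun _ _ f g => LeftHomotopic MS f.hom.hom g.hom.hom

instance : Congruence Φ.homotopyRel where
  equivalence :=
    ⟨fun _ => .refl _, .symm, .trans (Φ.cofibrant_obj _) (Φ.fibrant_obj _) (Φ.fibrant_obj _)⟩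
  comp_left f _ _ h := LeftHomotopic.precomp h (Φ.fibrant_obj _) f.hom.hom
  comp_right g h := LeftHomotopic.postcomp h g.hom.hom

/-- The objects of the subcategory, with the left homotopy classes of maps `Φ A ⟶ Φ B` as
morphisms `A ⟶ B`. -/
abbrev Ho := CategoryTheory.Quotient Φ.homotopyRel

def toHo : FullSubcategory P ⥤ Φ.Ho :=
  Φ.functor.toInducedCategory ⋙ CategoryTheory.Quotient.functor _

lemma toHo_inverts : (subW MS P).IsInvertedBy Φ.toHo := by
  intro A B u hu
  obtain ⟨w, hw₁, hw₂⟩ := exists_leftHomotopic_inverse (Φ.fibrant_obj A) (Φ.cofibrant_obj B)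
    (Φ.fibrant_obj B) (Φ.w_map u hu)
  exact ⟨⟨(CategoryTheory.Quotient.functor _).map (InducedCategory.homMk (homMk w)),
    CategoryTheory.Quotient.sound _ hw₁, CategoryTheory.Quotient.sound _ hw₂⟩⟩

variable (hcyl : ∀ X : E, P X → ∃ cyl : CylObj MS X, P cyl.I)

noncomputable def fromHo : Φ.Ho ⥤ (subW MS P).Localization :=
  CategoryTheory.Quotient.lift _
    ((inducedFunctor Φ.functor.obj ⋙ (subW MS P).Q).copyObj (subW MS P).Q.obj Φ.isoLocalization.app)
    fun A B _ _ h =>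
      congrArg (fun g => (Φ.isoLocalization.app A).inv ≫ g ≫ (Φ.isoLocalization.app B).hom)
        (map_eq_of_leftHomotopic hcyl (Φ.fibrant_obj B) h)

lemma toHo_comp_fromHo : Φ.toHo ⋙ Φ.fromHo hcyl = (subW MS P).Q :=
  CategoryTheory.Functor.ext (fun _ => rfl) fun A B u => by
    change Φ.isoLocalization.inv.app A ≫ (subW MS P).Q.map (Φ.functor.map u) ≫
      Φ.isoLocalization.hom.app B = 𝟙 _ ≫ (subW MS P).Q.map u ≫ 𝟙 _
    simpa using NatIso.naturality_1 Φ.isoLocalization u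

lemma lift_toHo_comp_fromHo :
    Localization.Construction.lift Φ.toHo Φ.toHo_inverts ⋙ Φ.fromHo hcyl = 𝟭 _ :=
  Localization.Construction.uniq _ _ <| by
    rw [← Functor.assoc, Localization.Construction.fac, toHo_comp_fromHo, Functor.comp_id]

theorem leftHomotopic_of_map_eq {A B : FullSubcategory P} {f g : A ⟶ B}
    (h : (subW MS P).Q.map f = (subW MS P).Q.map g) :
    LeftHomotopic MS (Φ.functor.map f).hom (Φ.functor.map g).hom := by
  have hfac := Localization.Construction.fac Φ.toHo Φ.toHo_inverts
  have hmap : ∀ u : A ⟶ B,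
      (Localization.Construction.lift Φ.toHo Φ.toHo_inverts).map ((subW MS P).Q.map u) =
        Φ.toHo.map u := fun u => eq_of_heq (Functor.hcongr_hom hfac u)
  exact (CategoryTheory.Quotient.functor_map_eq_iff Φ.homotopyRel _ _).1
    ((hmap f).symm.trans ((congrArg _ h).trans (hmap g)))

theorem exists_isoLocalization_conj_eq (hcyl : ∀ X : E, P X → ∃ cyl : CylObj MS X, P cyl.I)
    {A B : FullSubcategory P} (α : (subW MS P).Q.obj A ⟶ (subW MS P).Q.obj B) :
    ∃ h : Φ.functor.obj A ⟶ Φ.functor.obj B,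
      Φ.isoLocalization.inv.app A ≫ (subW MS P).Q.map h ≫ Φ.isoLocalization.hom.app B = α := by
  let toHoLift := Localization.Construction.lift Φ.toHo Φ.toHo_inverts
  have hα : (Φ.fromHo hcyl).map (toHoLift.map α) = α :=
    eq_of_heq (Functor.hcongr_hom (Φ.lift_toHo_comp_fromHo hcyl) α)
  obtain ⟨h, hh⟩ := Quot.exists_rep (toHoLift.map α)
  exact ⟨h.hom, by rw [← hα, ← hh]; rfl⟩

end BifibrantReplacement

section Replacement

variable {E : Type u} [Category.{v} E]

def ModelStructure.IsCofibrantReplacement [HasInitial E] (MS : ModelStructure E) {Q : E ⥤ E}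
    (q : Q ⟶ 𝟭 E) : Prop :=
  ∀ X : E, MS.Fib (q.app X) ∧ MS.W (q.app X) ∧ MS.Cofibrant (Q.obj X)

def ModelStructure.IsFibrantReplacement [HasTerminal E] (MS : ModelStructure E) {R : E ⥤ E}
    (r : 𝟭 E ⟶ R) : Prop :=
  ∀ X : E, MS.Cof (r.app X) ∧ MS.W (r.app X) ∧ MS.Fibrant (R.obj X)

variable {MS : ModelStructure E} {Q R : E ⥤ E} {q : Q ⟶ 𝟭 E} {r : 𝟭 E ⟶ R}

lemma ModelStructure.IsCofibrantReplacement.w_map [HasInitial E]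
    (hq : MS.IsCofibrantReplacement q) {X Y : E} {u : X ⟶ Y} (hu : MS.W u) : MS.W (Q.map u) :=
  MS.w_cancel_right _ _ (hq Y).2.1 (by rw [q.naturality]; exact MS.w_comp _ _ (hq X).2.1 hu)

lemma ModelStructure.IsFibrantReplacement.w_map [HasTerminal E]
    (hr : MS.IsFibrantReplacement r) {X Y : E} {u : X ⟶ Y} (hu : MS.W u) : MS.W (R.map u) :=
  MS.w_cancel_left _ _ (hr X).2.1 (by rw [← r.naturality]; exact MS.w_comp _ _ hu (hr Y).2.1)

lemma LeftHomotopic.of_map_map [HasBinaryCoproducts E] [HasInitial E] [HasTerminal E]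
    (hq : MS.IsCofibrantReplacement q) (hr : MS.IsFibrantReplacement r) {X Y : E}
    {f g : Q.obj X ⟶ R.obj Y} (h : LeftHomotopic MS (R.map (Q.map f)) (R.map (Q.map g))) :
    LeftHomotopic MS f g := by
  -- Conjugating by a section `s` of `q (Q X)` and a retraction `ρ` of `r (R Y)` undoes `Q ⋙ R`.
  obtain ⟨s, hs⟩ := MS.exists_lift_of_cofibrant (hq X).2.2 (hq (Q.obj X)).1 (hq (Q.obj X)).2.1
    (𝟙 _)
  obtain ⟨ρ, hρ⟩ := MS.exists_extension_of_fibrant (hr Y).2.2 (hr (R.obj Y)).1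
    (hr (R.obj Y)).2.1 (𝟙 _)
  have hconj (m : Q.obj X ⟶ R.obj Y) :
      s ≫ r.app _ ≫ R.map (Q.map m) ≫ R.map (q.app _) ≫ ρ = m := by
    simp only [← r.naturality_assoc, Functor.id_map, Functor.id_obj, hρ, Category.comp_id,
      q.naturality, reassoc_of% hs]
  simpa [hconj] using (h.precomp (hr _).2.2 (s ≫ r.app _)).postcomp (R.map (q.app _) ≫ ρ)

def restrictFunctor (P : E → Prop) (F : E ⥤ E) (hF : ∀ X : E, P X → P (F.obj X)) :
    FullSubcategory P ⥤ FullSubcategory P :=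
  ObjectProperty.lift P (ObjectProperty.ι P ⋙ F) fun A => hF _ A.property

variable {P : E → Prop} (hPQ : ∀ X : E, P X → P (Q.obj X)) (hPR : ∀ X : E, P X → P (R.obj X))

noncomputable def cofibrantReplacementIso [HasInitial E] (hq : MS.IsCofibrantReplacement q) :
    restrictFunctor P Q hPQ ⋙ (subW MS P).Q ≅ (subW MS P).Q :=
  NatIso.ofComponents
    (fun A => Localization.isoOfHom (subW MS P).Q (subW MS P)
      (homMk (q.app A.obj) : (restrictFunctor P Q hPQ).obj A ⟶ A) (hq A.obj).2.1)
    fun u => ((subW MS P).Q.map_comp _ _).symm.trans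
      ((congrArg (subW MS P).Q.map (ObjectProperty.hom_ext _ (q.naturality u.hom))).trans
        ((subW MS P).Q.map_comp _ _))

noncomputable def fibrantReplacementIso [HasTerminal E] (hr : MS.IsFibrantReplacement r) :
    (subW MS P).Q ≅ restrictFunctor P R hPR ⋙ (subW MS P).Q :=
  NatIso.ofComponents
    (fun A => Localization.isoOfHom (subW MS P).Q (subW MS P)
      (homMk (r.app A.obj) : A ⟶ (restrictFunctor P R hPR).obj A) (hr A.obj).2.1)
    fun u => ((subW MS P).Q.map_comp _ _).symm.trans
      ((congrArg (subW MS P).Q.map (ObjectProperty.hom_ext _ (r.naturality u.hom))).trans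
        ((subW MS P).Q.map_comp _ _))

noncomputable def BifibrantReplacement.ofReplacements [HasInitial E] [HasTerminal E]
    (hq : MS.IsCofibrantReplacement q) (hr : MS.IsFibrantReplacement r) :
    BifibrantReplacement MS P where
  functor := restrictFunctor P Q hPQ ⋙ restrictFunctor P R hPR
  cofibrant_obj _ := MS.cofibrant_of_cof (hr _).1 (hq _).2.2
  fibrant_obj _ := (hr _).2.2
  w_map _ _ _ hu := hr.w_map (hq.w_map hu)
  isoLocalization := Functor.isoWhiskerLeft (restrictFunctor P Q hPQ)
      (fibrantReplacementIso hPR hr).symm ≪≫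
    cofibrantReplacementIso hPQ hq

end Replacement

lemma locRep_eq_locRep_iff {E : Type u} [Category.{v} E] (MS : ModelStructure E) (P : E → Prop)
    {QX X RY Y : E} (hQX : P QX) (hX : P X) (hRY : P RY) (hY : P Y)
    (qX : QX ⟶ X) (hq : MS.W qX) (rY : Y ⟶ RY) (hr : MS.W rY) {f g : QX ⟶ RY} :
    locRep MS P hQX hX hRY hY qX hq rY hr f = locRep MS P hQX hX hRY hY qX hq rY hr g ↔
      (subW MS P).Q.map (homMk f : (⟨QX, hQX⟩ : FullSubcategory P) ⟶ ⟨RY, hRY⟩) =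
        (subW MS P).Q.map (homMk g) := by
  simp [locRep]

lemma locRep_eq_isoLocalization_conj {E : Type u} [Category.{v} E] [HasInitial E] [HasTerminal E]
    {MS : ModelStructure E} {Q R : E ⥤ E} {q : Q ⟶ 𝟭 E} {r : 𝟭 E ⟶ R} {P : E → Prop}
    (hq : MS.IsCofibrantReplacement q) (hr : MS.IsFibrantReplacement r)
    (hPQ : ∀ X : E, P X → P (Q.obj X)) (hPR : ∀ X : E, P X → P (R.obj X))
    {X Y : E} (hX : P X) (hY : P Y)
    (h : (restrictFunctor P R hPR).obj ((restrictFunctor P Q hPQ).obj ⟨X, hX⟩) ⟶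
      (restrictFunctor P R hPR).obj ((restrictFunctor P Q hPQ).obj ⟨Y, hY⟩)) :
    locRep MS P (hPQ X hX) hX (hPR Y hY) hY (q.app X) (hq X).2.1 (r.app Y) (hr Y).2.1
        (r.app (Q.obj X) ≫ h.hom ≫ R.map (q.app Y)) =
      (BifibrantReplacement.ofReplacements hPQ hPR hq hr).isoLocalization.inv.app ⟨X, hX⟩ ≫
        (subW MS P).Q.map h ≫
        (BifibrantReplacement.ofReplacements hPQ hPR hq hr).isoLocalization.hom.app ⟨Y, hY⟩ := by
  let Q' := restrictFunctor P Q hPQ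
  let R' := restrictFunctor P R hPR
  let rQX : Q'.obj ⟨X, hX⟩ ⟶ R'.obj (Q'.obj ⟨X, hX⟩) := homMk (r.app (Q.obj X))
  let qY : Q'.obj ⟨Y, hY⟩ ⟶ ⟨Y, hY⟩ := homMk (q.app Y)
  change (cofibrantReplacementIso hPQ hq).inv.app ⟨X, hX⟩ ≫
      (subW MS P).Q.map (rQX ≫ h ≫ R'.map qY) ≫ (fibrantReplacementIso hPR hr).inv.app ⟨Y, hY⟩ =
    ((cofibrantReplacementIso hPQ hq).inv.app ⟨X, hX⟩ ≫ (subW MS P).Q.map rQX) ≫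
      (subW MS P).Q.map h ≫ (fibrantReplacementIso hPR hr).inv.app (Q'.obj ⟨Y, hY⟩) ≫
        (subW MS P).Q.map qY
  rw [← (fibrantReplacementIso hPR hr).inv.naturality qY]
  simp only [Functor.map_comp, Functor.comp_map, Category.assoc]
  rfl

/-- `f ↦ L(r_Y)⁻¹ ∘ L(f) ∘ L(q_X)⁻¹` induces a bijection
`Hom_D(QX, RY)/∼ ≅ Hom_{D[W_D⁻¹]}(X, Y)`, where `∼` is left homotopy. -/
theorem locRep_bijective_on_homotopy_classes
    {E : Type u} [Category.{v} E] [HasBinaryCoproducts E] [HasInitial E] [HasTerminal E]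
    (MS : ModelStructure E)
    (Q R : E ⥤ E) (q : Q ⟶ 𝟭 E) (r : 𝟭 E ⟶ R)
    (hq : ∀ X : E, MS.Fib (q.app X) ∧ MS.W (q.app X) ∧ MS.Cofibrant (Q.obj X))
    (hr : ∀ X : E, MS.Cof (r.app X) ∧ MS.W (r.app X) ∧ MS.Fibrant (R.obj X))
    (P : E → Prop)
    (hPQ : ∀ X : E, P X → P (Q.obj X)) (hPR : ∀ X : E, P X → P (R.obj X))
    (hcyl : ∀ X : E, P X → ∃ cyl : CylObj MS X, P cyl.I)
    (X Y : E) (hX : P X) (hY : P Y) :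
    (∀ f g : Q.obj X ⟶ R.obj Y,
        locRep MS P (hPQ X hX) hX (hPR Y hY) hY
            (q.app X) (hq X).2.1 (r.app Y) (hr Y).2.1 f =
          locRep MS P (hPQ X hX) hX (hPR Y hY) hY
            (q.app X) (hq X).2.1 (r.app Y) (hr Y).2.1 g ↔
        LeftHomotopic MS f g) ∧
    Function.Surjective
      (fun f : Q.obj X ⟶ R.obj Y =>
        locRep MS P (hPQ X hX) hX (hPR Y hY) hY
          (q.app X) (hq X).2.1 (r.app Y) (hr Y).2.1 f) := by
  let Φ := BifibrantReplacement.ofReplacements hPQ hPR (MS := MS) hq hr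
  refine ⟨fun f g => ?_, fun α => ?_⟩
  · rw [locRep_eq_locRep_iff]
    exact ⟨fun h => (Φ.leftHomotopic_of_map_eq h).of_map_map hq hr,
      fun h => map_eq_of_leftHomotopic (A := ⟨_, hPQ X hX⟩) (B := ⟨_, hPR Y hY⟩)
        (f := homMk f) (g := homMk g) hcyl (hr Y).2.2 h⟩
  · obtain ⟨h, rfl⟩ := Φ.exists_isoLocalization_conj_eq hcyl α
    exact ⟨r.app (Q.obj X) ≫ h.hom ≫ R.map (q.app Y),
      locRep_eq_isoLocalization_conj hq hr hPQ hPR hX hY h⟩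
end

section
/- Let M be a model category and consider objects and morphisms f₀ : B → A₀, f₁ : B → A₁, g : B → C, g₀ : A₀ → D₀, g₁ : A₁ → D₁, f′₀ : C → D₀, f′₁ : C → D₁. Assume that g₀ ∘ f₀ is left homotopic to f′₀ ∘ g and that g₁ ∘ f₁ is left homotopic to f′₁ ∘ g, that B is cofibrant, and that the induced map (f′₀, f′₁) : C → D₀ × D₁ into the product is a fibration. Then there exists a map ḡ : B → C which is left homotopic to g and satisfies f′₀ ∘ ḡ = g₀ ∘ f₀ and f′₁ ∘ ḡ = g₁ ∘ f₁. -/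
/-! Since `B` is cofibrant, the end inclusion `i₁` of any cylinder on `B` is a trivial
cofibration, so a homotopy ending at `b ≫ p` lifts along a fibration `p`. Applied to
`p = (f'₀, f'₁) : C ⟶ D₀ ⨯ D₁`, lifting `h₁` (paired with the constant homotopy on the `D₀`
coordinate) moves `g` to a map `g'` that is correct on `D₁`, and lifting `h₀` (constant on `D₁`)
then moves `g'` to `gbar`, correct on both. The two homotopies `gbar ~ g' ~ g` compose because
left homotopy is transitive on maps out of a cofibrant object. -/

open CategoryTheory Limits

universe v u

variable {C : Type u} [Category.{v} C]

section

variable {E : Type u} [Category.{v} E] {MS : ModelStructure E}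

lemma ModelStructure.cof_of_hasLiftingProperty_s7 {X Y : E} (i : X ⟶ Y)
    (hi : ∀ {Z W : E} (p : Z ⟶ W), MS.Fib p → MS.W p → HasLiftingProperty i p) :
    MS.Cof i := by
  obtain ⟨Z, c, t, hc, htf, htw, hct⟩ := MS.factor_cof_trivFib i
  have := hi t htf htw
  have sq : CommSq c i t (𝟙 Y) := ⟨by simp [hct]⟩
  exact MS.cof_retract i c ⟨𝟙 X, 𝟙 X, sq.lift, t, by simp, sq.fac_right, by simp, by simp [hct]⟩ hc

namespace CylObj

variable [HasBinaryCoproducts E] {B : E}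

lemma w_i₁ (cyl : CylObj MS B) : MS.W cyl.i₁ :=
  MS.w_cancel_right cyl.i₁ cyl.π cyl.we (by rw [cyl.h₁]; exact MS.w_id B)

/-- `i₁` factors as `coprod.inr`, a cobase change of `⊥ ⟶ B`, followed by the cofibration
`B ⨿ B ⟶ I`; both lift against trivial fibrations. -/
lemma cof_i₁ [HasInitial E] (hB : MS.Cofibrant B) (cyl : CylObj MS B) : MS.Cof cyl.i₁ := by
  refine MS.cof_of_hasLiftingProperty_s7 _ fun p hpf hpw => ?_
  have := MS.lift_cof_trivFib _ p hB hpf hpw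
  have := MS.lift_cof_trivFib _ p cyl.cof hpf hpw
  have := (IsPushout.of_hasBinaryCoproduct' B B).flip.hasLiftingProperty p
  rw [← coprod.inr_desc cyl.i₀ cyl.i₁]
  infer_instance

end CylObj

namespace LeftHomotopic

variable [HasBinaryCoproducts E] {B X Y : E}

lemma prod_lift_fst [HasBinaryProducts E] {u v : B ⟶ X} (h : LeftHomotopic MS u v)
    (w : B ⟶ Y) : LeftHomotopic MS (prod.lift u w) (prod.lift v w) := by
  obtain ⟨cyl, H, hH₀, hH₁⟩ := h
  exact ⟨cyl, prod.lift H (cyl.π ≫ w), by simp [hH₀, reassoc_of% cyl.h₀],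
    by simp [hH₁, reassoc_of% cyl.h₁]⟩

lemma prod_lift_snd [HasBinaryProducts E] {u v : B ⟶ Y} (h : LeftHomotopic MS u v)
    (w : B ⟶ X) : LeftHomotopic MS (prod.lift w u) (prod.lift w v) := by
  obtain ⟨cyl, H, hH₀, hH₁⟩ := h
  exact ⟨cyl, prod.lift (cyl.π ≫ w) H, by simp [hH₀, reassoc_of% cyl.h₀],
    by simp [hH₁, reassoc_of% cyl.h₁]⟩

/-- The lift of the homotopy along the trivial cofibration `i₁` is itself a homotopy from the
new map to `b`. -/
lemma exists_homotopic_lift [HasInitial E] (hB : MS.Cofibrant B) {p : X ⟶ Y} (hp : MS.Fib p)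
    {u : B ⟶ Y} {b : B ⟶ X} (h : LeftHomotopic MS u (b ≫ p)) :
    ∃ a : B ⟶ X, a ≫ p = u ∧ LeftHomotopic MS a b := by
  obtain ⟨cyl, H, hH₀, hH₁⟩ := h
  have := MS.lift_trivCof_fib cyl.i₁ p (cyl.cof_i₁ hB) cyl.w_i₁ hp
  have sq : CommSq b cyl.i₁ p H := ⟨hH₁.symm⟩
  exact ⟨cyl.i₀ ≫ sq.lift, by rw [Category.assoc, sq.fac_right, hH₀], cyl, sq.lift, rfl,
    sq.fac_left⟩

/-- The cylinder is `J`, from a factorization `B ⨿ B ⟶ J ⟶ P` of `(e, j)` as a cofibration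
followed by a trivial fibration; `q ≫ prod.snd` is a weak equivalence by two-out-of-three. -/
lemma of_comp_eq_prod_lift [HasBinaryProducts E] {P : E} {j e : B ⟶ P} {q : P ⟶ X ⨯ B}
    {a c : B ⟶ X} (hj : MS.W j) (hjq : j ≫ q = prod.lift c (𝟙 B))
    (he : e ≫ q = prod.lift a (𝟙 B)) : LeftHomotopic MS a c := by
  obtain ⟨J, k, t, hk, -, ht, hkt⟩ := MS.factor_cof_trivFib (coprod.desc e j)
  have hq_snd : MS.W (q ≫ prod.snd) :=
    MS.w_cancel_left j _ hj (by rw [reassoc_of% hjq, prod.lift_snd]; exact MS.w_id B)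
  have he' : coprod.inl ≫ k ≫ t = e := by rw [hkt, coprod.inl_desc]
  have hj' : coprod.inr ≫ k ≫ t = j := by rw [hkt, coprod.inr_desc]
  refine ⟨⟨J, coprod.inl ≫ k, coprod.inr ≫ k, t ≫ q ≫ prod.snd, ?_, MS.w_comp _ _ ht hq_snd,
    ?_, ?_⟩, t ≫ q ≫ prod.fst, ?_, ?_⟩
  · rwa [← coprod.desc_comp, coprod.desc_inl_inr, Category.id_comp]
  all_goals simp only [Category.assoc, reassoc_of% he', reassoc_of% hj', reassoc_of% he,
    reassoc_of% hjq, prod.lift_fst, prod.lift_snd]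

/-- Without pushouts the two cylinders cannot be glued; instead both homotopies are lifted, one
after the other, into a factorization of `(c, 𝟙)` as a trivial cofibration and a fibration. -/
lemma trans_s7 [HasBinaryProducts E] [HasInitial E] (hB : MS.Cofibrant B) {a b c : B ⟶ X}
    (hab : LeftHomotopic MS a b) (hbc : LeftHomotopic MS b c) : LeftHomotopic MS a c := by
  obtain ⟨P, j, q, -, hj, hq, hjq⟩ := MS.factor_trivCof_fib (prod.lift c (𝟙 B))
  obtain ⟨eb, heb, -⟩ := exists_homotopic_lift hB hq (hjq ▸ hbc.prod_lift_fst (𝟙 B))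
  obtain ⟨ea, hea, -⟩ := exists_homotopic_lift hB hq (heb ▸ hab.prod_lift_fst (𝟙 B))
  exact of_comp_eq_prod_lift hj hjq hea

end LeftHomotopic

end

/-- a map homotopy-commuting with two maps into the legs of a fibration
`C → D₀ × D₁` can be replaced, up to left homotopy, by one strictly commuting. -/
theorem homotopic_to_strictly_commuting
    {E : Type u} [Category.{v} E] [HasBinaryCoproducts E] [HasBinaryProducts E]
    [HasInitial E] (MS : ModelStructure E)
    {B A₀ A₁ C D₀ D₁ : E}
    (f₀ : B ⟶ A₀) (f₁ : B ⟶ A₁) (g : B ⟶ C)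
    (g₀ : A₀ ⟶ D₀) (g₁ : A₁ ⟶ D₁) (f'₀ : C ⟶ D₀) (f'₁ : C ⟶ D₁)
    (h₀ : LeftHomotopic MS (f₀ ≫ g₀) (g ≫ f'₀))
    (h₁ : LeftHomotopic MS (f₁ ≫ g₁) (g ≫ f'₁))
    (hB : MS.Cofibrant B)
    (hfib : MS.Fib (prod.lift f'₀ f'₁)) :
    ∃ gbar : B ⟶ C, LeftHomotopic MS gbar g ∧
      gbar ≫ f'₀ = f₀ ≫ g₀ ∧ gbar ≫ f'₁ = f₁ ≫ g₁ := by
  have h₁' : LeftHomotopic MS (prod.lift (g ≫ f'₀) (f₁ ≫ g₁)) (g ≫ prod.lift f'₀ f'₁) := by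
    rw [prod.comp_lift]
    exact h₁.prod_lift_snd _
  obtain ⟨g', hg'_comp, hg'_g⟩ := h₁'.exists_homotopic_lift hB hfib
  have h₀' : LeftHomotopic MS (prod.lift (f₀ ≫ g₀) (f₁ ≫ g₁)) (g' ≫ prod.lift f'₀ f'₁) := by
    rw [hg'_comp]
    exact h₀.prod_lift_fst _
  obtain ⟨gbar, hgbar_comp, hgbar_g'⟩ := h₀'.exists_homotopic_lift hB hfib
  refine ⟨gbar, hgbar_g'.trans_s7 hB hg'_g, ?_, ?_⟩
  · simpa only [Category.assoc, prod.lift_fst] using hgbar_comp =≫ prod.fst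
  · simpa only [Category.assoc, prod.lift_snd] using hgbar_comp =≫ prod.snd
end

section
/- Let M be a model category and let X and Y be objects that are both fibrant and cofibrant and are connected by a zigzag of weak equivalences. Then there exist a cofibrant object Z and weak equivalences α : Z → X and α′ : Z → Y such that the induced map (α, α′) : Z → X × Y into the product is a fibration. -/
open CategoryTheory Limits

universe v u

variable {C : Type u} [Category.{v} C]

/-- A zigzag of weak equivalences between two objects. -/
def ZigzagWE {E : Type u} [Category.{v} E] (MS : ModelStructure E) : E → E → Prop :=
  Relation.ReflTransGen (fun A B => (∃ f : A ⟶ B, MS.W f) ∨ (∃ g : B ⟶ A, MS.W g))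

/-! Walk along the zigzag from `X`, keeping a span `X ← Z → A` of weak equivalences with
`Z` cofibrant, starting from a cofibrant replacement of `X`. A forward step composes. For a
backward step `g : c ⟶ b`, take a cofibrant replacement `Q ⟶ c`; factoring `Z ⟶ b` as a
trivial cofibration `Z ⟶ Z'` followed by a trivial fibration, `Q ⟶ c ⟶ b` lifts to
`Q ⟶ Z'`, and since `X` is fibrant, `Z ⟶ X` extends along `Z ⟶ Z'`; the composite
`Q ⟶ Z' ⟶ X` is a weak equivalence by two-out-of-three. Finally, factoring `Z ⟶ X ⨯ Y` as a
trivial cofibration followed by a fibration gives the required span. -/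

namespace ModelStructure

variable (MS : ModelStructure C)

/-- The retract argument: `f ≫ g` is a retract of the cofibration in its factorization. -/
lemma cof_comp_s9 {X Y Z : C} (f : X ⟶ Y) (g : Y ⟶ Z) (hf : MS.Cof f) (hg : MS.Cof g) :
    MS.Cof (f ≫ g) := by
  obtain ⟨W', i, p, hi, hp, hpw, hfac⟩ := MS.factor_cof_trivFib (f ≫ g)
  have := MS.lift_cof_trivFib f p hf hp hpw
  have := MS.lift_cof_trivFib g p hg hp hpw
  have sq₁ : CommSq i f p g := ⟨by simpa using hfac⟩
  have sq₂ : CommSq sq₁.lift g p (𝟙 Z) := ⟨by simp⟩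
  refine MS.cof_retract (f ≫ g) i
    ⟨𝟙 X, 𝟙 X, sq₂.lift, p, by simp, by simp, ?_, by simp [hfac]⟩ hi
  simp [sq₂.fac_left, sq₁.fac_left]

lemma cofibrant_of_cof_s9 [HasInitial C] {Z Z' : C} (hZ : MS.Cofibrant Z) {i : Z ⟶ Z'}
    (hi : MS.Cof i) : MS.Cofibrant Z' := by
  rw [Cofibrant, Subsingleton.elim (initial.to Z') (initial.to Z ≫ i)]
  exact MS.cof_comp_s9 _ _ hZ hi

lemma exists_cofibrant_replacement [HasInitial C] (X : C) :
    ∃ (Q : C) (p : Q ⟶ X), MS.Cofibrant Q ∧ MS.W p := by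
  obtain ⟨Q, i, p, hi, -, hp, -⟩ := MS.factor_cof_trivFib (initial.to X)
  exact ⟨Q, p, by rwa [Cofibrant, Subsingleton.elim (initial.to Q) i], hp⟩

lemma exists_lift_of_cofibrant_s9 [HasInitial C] {Q Z B : C} (hQ : MS.Cofibrant Q)
    {q : Z ⟶ B} (hq : MS.Fib q) (hqw : MS.W q) (f : Q ⟶ B) : ∃ l : Q ⟶ Z, l ≫ q = f := by
  have := MS.lift_cof_trivFib _ q hQ hq hqw
  have sq : CommSq (initial.to Z) (initial.to Q) q f := ⟨initial.hom_ext _ _⟩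
  exact ⟨sq.lift, sq.fac_right⟩

lemma exists_extension_of_fibrant_s9 [HasTerminal C] {X Z Z' : C} (hX : MS.Fibrant X)
    {i : Z ⟶ Z'} (hi : MS.Cof i) (hiw : MS.W i) (α : Z ⟶ X) : ∃ l : Z' ⟶ X, i ≫ l = α := by
  have := MS.lift_trivCof_fib i _ hi hiw hX
  have sq : CommSq α i (terminal.from X) (terminal.from Z') := ⟨terminal.hom_ext _ _⟩
  exact ⟨sq.lift, sq.fac_left⟩

lemma exists_w_of_span [HasInitial C] [HasTerminal C] {Q X Z B : C} (hQ : MS.Cofibrant Q)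
    (hX : MS.Fibrant X) {α : Z ⟶ X} {β : Z ⟶ B} (hα : MS.W α) (hβ : MS.W β) {f : Q ⟶ B}
    (hf : MS.W f) : ∃ h : Q ⟶ X, MS.W h := by
  obtain ⟨Z', i, q, hi, hiw, hq, hfac⟩ := MS.factor_trivCof_fib β
  have hqw : MS.W q := MS.w_cancel_left i q hiw (hfac ▸ hβ)
  obtain ⟨l, hl⟩ := MS.exists_lift_of_cofibrant_s9 hQ hq hqw f
  obtain ⟨e, he⟩ := MS.exists_extension_of_fibrant_s9 hX hi hiw α
  have hlw : MS.W l := MS.w_cancel_right l q hqw (hl ▸ hf)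
  have hew : MS.W e := MS.w_cancel_left i e hiw (he ▸ hα)
  exact ⟨l ≫ e, MS.w_comp l e hlw hew⟩

lemma exists_cofibrant_span_of_zigzagWE [HasInitial C] [HasTerminal C] {X A : C}
    (hX : MS.Fibrant X) (h : ZigzagWE MS X A) :
    ∃ (Z : C) (α : Z ⟶ X) (β : Z ⟶ A), MS.Cofibrant Z ∧ MS.W α ∧ MS.W β := by
  induction h with
  | refl =>
    obtain ⟨Q, p, hQ, hp⟩ := MS.exists_cofibrant_replacement X
    exact ⟨Q, p, p, hQ, hp, hp⟩
  | tail _ step ih =>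
    obtain ⟨Z, α, β, hZ, hα, hβ⟩ := ih
    rcases step with ⟨f, hf⟩ | ⟨g, hg⟩
    · exact ⟨Z, α, β ≫ f, hZ, hα, MS.w_comp β f hβ hf⟩
    · obtain ⟨Q, p, hQ, hp⟩ := MS.exists_cofibrant_replacement _
      obtain ⟨h, hh⟩ := MS.exists_w_of_span hQ hX hα hβ (MS.w_comp p g hp hg)
      exact ⟨Q, h, p, hQ, hh, hp⟩

lemma exists_span_fib_prod_lift [HasInitial C] [HasBinaryProducts C] {Z X Y : C}
    (hZ : MS.Cofibrant Z) {α : Z ⟶ X} {β : Z ⟶ Y} (hα : MS.W α) (hβ : MS.W β) :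
    ∃ (Z' : C) (α' : Z' ⟶ X) (β' : Z' ⟶ Y),
      MS.Cofibrant Z' ∧ MS.W α' ∧ MS.W β' ∧ MS.Fib (prod.lift α' β') := by
  obtain ⟨Z', i, p, hi, hiw, hp, hfac⟩ := MS.factor_trivCof_fib (prod.lift α β)
  have hfst : i ≫ p ≫ prod.fst = α := by rw [reassoc_of% hfac, prod.lift_fst]
  have hsnd : i ≫ p ≫ prod.snd = β := by rw [reassoc_of% hfac, prod.lift_snd]
  refine ⟨Z', p ≫ prod.fst, p ≫ prod.snd, MS.cofibrant_of_cof_s9 hZ hi,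
    MS.w_cancel_left i _ hiw (hfst ▸ hα), MS.w_cancel_left i _ hiw (hsnd ▸ hβ), ?_⟩
  rwa [← prod.comp_lift, prod.lift_fst_snd, Category.comp_id]

end ModelStructure

theorem exists_span_of_zigzag_general
    {E : Type u} [Category.{v} E] [HasTerminal E] [HasInitial E] [HasBinaryProducts E]
    (MS : ModelStructure E) {X Y : E}
    (hXf : MS.Fibrant X)
    (hzz : ZigzagWE MS X Y) :
    ∃ (Z : E) (α : Z ⟶ X) (α' : Z ⟶ Y),
      MS.Cofibrant Z ∧ MS.W α ∧ MS.W α' ∧ MS.Fib (prod.lift α α') := by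
  obtain ⟨Z, α, β, hZ, hα, hβ⟩ := MS.exists_cofibrant_span_of_zigzagWE hXf hzz
  exact MS.exists_span_fib_prod_lift hZ hα hβ

/-- two fibrant-cofibrant objects connected by a zigzag of weak
equivalences can be connected by a span of weak equivalences from a cofibrant object
whose induced map to the product is a fibration. -/
theorem exists_span_of_zigzag
    {E : Type u} [Category.{v} E] [HasTerminal E] [HasInitial E] [HasBinaryProducts E]
    (MS : ModelStructure E) {X Y : E}
    (hXf : MS.Fibrant X) (hXc : MS.Cofibrant X)
    (hYf : MS.Fibrant Y) (hYc : MS.Cofibrant Y)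
    (hzz : ZigzagWE MS X Y) :
    ∃ (Z : E) (α : Z ⟶ X) (α' : Z ⟶ Y),
      MS.Cofibrant Z ∧ MS.W α ∧ MS.W α' ∧ MS.Fib (prod.lift α α') :=
  exists_span_of_zigzag_general MS hXf hzz
end
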